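/- Let m be a universal probability and q > 1. Then the Tsallis entropy S_q(m) = (1/(q-1)) ∑_{s∈{0,1}*} (m(s) - m(s)^q) converges; if instead 0 < q < 1, then S_q(m) diverges to infinity. -/

import Mathlib

open Filter Topology

namespace Paper

/-- Finite binary strings. -/
abbrev Str := List Bool

/-- A computer: a partial recursive function on binary strings with prefix-free domain. -/
structure Computer where
  f : Str →. Str
  partrec : Partrec f
  prefixFree : ∀ p q : Str, (f p).Dom → (f q).Dom → p <+: q → p = q

/-- An optimal computer (universal self-delimiting Turing machine). -/
structure OptimalComputer extends Computer where
  optimal : ∀ C : Computer, ∃ sim : ℕ, ∀ p s, s ∈ C.f p →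
    ∃ p', s ∈ toComputer.f p' ∧ p'.length ≤ p.length + sim

/-- Prefix-free Kolmogorov complexity (program-size complexity) w.r.t. `U`. -/
noncomputable def Kc (U : OptimalComputer) (s : Str) : ℕ :=
  sInf {n | ∃ p : Str, p.length = n ∧ s ∈ U.f p}

/-- A semi-measure on binary strings: values in [0,1] with all finite partial sums ≤ 1. -/
def SemiMeasure (r : Str → ℝ) : Prop :=
  (∀ s, 0 ≤ r s ∧ r s ≤ 1) ∧ ∀ F : Finset Str, ∑ s ∈ F, r s ≤ 1

/-- Lower-computability: approximability from below by a total recursive rational function. -/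
def LowerComputable (r : Str → ℝ) : Prop :=
  ∃ f : ℕ → Str → ℚ, Computable₂ f ∧
    ∀ s : Str, (∀ n : ℕ, 0 ≤ f n s ∧ (f n s : ℝ) ≤ r s) ∧
      Tendsto (fun n => (f n s : ℝ)) atTop (nhds (r s))

/-- A lower-computable semi-measure. -/
def LCSemiMeasure (r : Str → ℝ) : Prop := SemiMeasure r ∧ LowerComputable r

/-- A universal probability: a lower-computable semi-measure dominating all
lower-computable semi-measures up to a positive multiplicative constant. -/
def UniversalProb (m : Str → ℝ) : Prop :=
  LCSemiMeasure m ∧ ∀ r : Str → ℝ, LCSemiMeasure r → ∃ c : ℝ, 0 < c ∧ ∀ s, c * r s ≤ m s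

/-- The first `n` bits of the base-two expansion of `T mod 1`
(the expansion with infinitely many zeros). -/
noncomputable def binPrefix (T : ℝ) (n : ℕ) : Str :=
  (List.range n).map (fun i => decide (⌊Int.fract T * 2 ^ (i + 1)⌋ % 2 = 1))

/-- A real is right-computable if it is the limit from above of a recursive
sequence of rationals. -/
def RightComputableReal (T : ℝ) : Prop :=
  ∃ g : ℕ → ℚ, Computable g ∧ (∀ n, T ≤ (g n : ℝ)) ∧
    Tendsto (fun n => (g n : ℝ)) atTop (nhds T)

/-- A real is left-computable if its negation is right-computable. -/
def LeftComputableReal (T : ℝ) : Prop := RightComputableReal (-T)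

/-- A computable real number. -/
def ComputableReal (T : ℝ) : Prop :=
  ∃ f : ℕ → ℚ, Computable f ∧ ∀ n : ℕ, |T - (f n : ℝ)| < (2 : ℝ)⁻¹ ^ n

/-- A recursively enumerable set of binary strings. -/
def REset (A : Set Str) : Prop :=
  ∃ g : Str →. Unit, Partrec g ∧ ∀ s, (g s).Dom ↔ s ∈ A

/-- `T` is weakly Chaitin `D`-random. -/
noncomputable def WeaklyChaitinDRandom (U : OptimalComputer) (D T : ℝ) : Prop :=
  ∃ c : ℕ, ∀ n : ℕ, D * n - c ≤ Kc U (binPrefix T n)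

/-- `T` is `D`-compressible. -/
noncomputable def DCompressible (U : OptimalComputer) (D T : ℝ) : Prop :=
  Filter.atTop.limsup (fun n : ℕ => (Kc U (binPrefix T n) : ℝ) / n) ≤ D

/-! A universal probability `m` dominates the computable semimeasure
`r(s) = 2^{-|s|} / ((|s|+1)(|s|+2))`, which puts mass `1/(n+1) - 1/(n+2)` on the strings of
length `n`. For `q > 1` each term `(m s - m s ^ q)/(q-1)` lies between `0` and `m s/(q-1)`, so the
series converges because `∑ m ≤ 1`. For `q < 1` the terms equal `(m s ^ q - m s)/(1-q)`, and the
`2^n` strings of length `n` contribute at least `2^n (c 2^{-n} / ((n+1)(n+2)))^q`, hence at least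
`c^q (2^{1-q})^n / ((n+1)(n+2))`, to `∑ m ^ q`, which is therefore unbounded. -/

end Paper

theorem Nat.coprime_iff_forall_dvd_lt {a b : ℕ} :
    a.Coprime b ↔ ∀ d < a + b + 1, d ∣ a → d ∣ b → d = 1 := by
  refine ⟨fun h d _ hda hdb => Nat.eq_one_of_dvd_coprimes h hda hdb, fun h => ?_⟩
  refine h _ ?_ (Nat.gcd_dvd_left a b) (Nat.gcd_dvd_right a b)
  rcases Nat.eq_zero_or_pos b with rfl | hb
  · simp
  · have := Nat.le_of_dvd hb (Nat.gcd_dvd_right a b)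
    omega

namespace Primrec

theorem nat_dvd : PrimrecRel ((· ∣ ·) : ℕ → ℕ → Prop) :=
  (Primrec.eq.comp (nat_mod.comp snd fst) (const 0)).of_eq fun _ => Nat.dvd_iff_mod_eq_zero.symm

theorem nat_coprime : PrimrecRel Nat.Coprime := by
  have hdvd (f : ℕ × ℕ → ℕ) (hf : Primrec f) : PrimrecRel fun (d : ℕ) (p : ℕ × ℕ) => d ∣ f p :=
    nat_dvd.comp fst (hf.comp snd)
  have hcommon : PrimrecRel fun (d : ℕ) (p : ℕ × ℕ) => d ∣ p.1 → d ∣ p.2 → d = 1 :=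
    (((hdvd _ fst).not.or (hdvd _ snd).not).or (Primrec.eq.comp fst (const 1))).of_eq
      fun _ => by tauto
  exact (hcommon.forall_mem_list.comp
    (list_range.comp (nat_add.comp (nat_add.comp fst snd) (const 1))) .id).of_eq
    fun _ => by simp [Nat.coprime_iff_forall_dvd_lt]

theorem int_natAbs : Primrec Int.natAbs := by
  refine ((nat_div.comp succ (const 2)).comp (Primrec.encode (α := ℤ))).of_eq fun z => ?_
  cases z with
  | ofNat n => show (2 * n + 1) / 2 = n; omega
  | negSucc n => show (2 * n + 1 + 1) / 2 = n + 1; omega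

end Primrec

theorem Rat.mem_range_encode_iff (k : ℕ) :
    k ∈ Set.range (@Encodable.encode ℚ Rat.instEncodable) ↔
      0 < k.unpair.2 ∧ (Denumerable.ofNat ℤ k.unpair.1).natAbs.Coprime k.unpair.2 := by
  constructor
  · rintro ⟨x, rfl⟩
    show 0 < (Nat.pair (Encodable.encode x.num) x.den).unpair.2 ∧
      (Denumerable.ofNat ℤ (Nat.pair (Encodable.encode x.num) x.den).unpair.1).natAbs.Coprime
        (Nat.pair (Encodable.encode x.num) x.den).unpair.2
    simp only [Nat.unpair_pair, Denumerable.ofNat_encode]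
    exact ⟨x.pos, x.reduced⟩
  · rintro ⟨hpos, hcop⟩
    refine ⟨⟨Denumerable.ofNat ℤ k.unpair.1, k.unpair.2, hpos.ne', hcop⟩, ?_⟩
    show Nat.pair (Encodable.encode (Denumerable.ofNat ℤ k.unpair.1)) k.unpair.2 = k
    rw [Denumerable.encode_ofNat, Nat.pair_unpair]

theorem Primrec.rat_of_num_den {α : Type*} [Primcodable α] {f : α → ℚ}
    (hnum : Primrec fun a => (f a).num) (hden : Primrec fun a => (f a).den) : Primrec f := by
  have hrange : PrimrecPred (· ∈ Set.range (@Encodable.encode ℚ Rat.instEncodable)) :=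
    ((nat_lt.comp (const 0) (snd.comp unpair)).and (nat_coprime.comp
      (int_natAbs.comp ((Primrec.ofNat ℤ).comp (fst.comp unpair))) (snd.comp unpair))).of_eq
      fun k => (Rat.mem_range_encode_iff k).symm
  have hraw : Primrec fun a => @Encodable.encode ℚ Rat.instEncodable (f a) :=
    Primrec₂.natPair.comp (Primrec.encode.comp hnum) hden
  -- `Primcodable ℚ` comes from `Denumerable.ofEncodableOfInfinite`: the code of `x` is the
  -- number of codes of `Rat.instEncodable` below the raw code `Nat.pair (encode x.num) x.den`.
  let _ := @Encodable.decidableRangeEncode ℚ Rat.instEncodable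
  rw [← Primrec.encode_iff]
  refine (list_length.comp ((listFilter hrange).comp (list_range.comp hraw))).of_eq fun a => ?_
  rw [← List.countP_eq_length_filter]
  rfl

theorem tendsto_pow_div_pow_const_atTop {b : ℝ} (hb : 1 < b) (k : ℕ) :
    Tendsto (fun n : ℕ => b ^ n / (n : ℝ) ^ k) atTop atTop := by
  have hpos : ∀ᶠ n : ℕ in atTop, 0 < (n : ℝ) ^ k / b ^ n :=
    (eventually_gt_atTop 0).mono fun n hn => by
      have : (0 : ℝ) < b ^ n := pow_pos (by linarith) n
      positivity
  refine ((tendsto_nhdsWithin_iff.mpr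
    ⟨tendsto_pow_const_div_const_pow_of_one_lt k hb, hpos⟩).inv_tendsto_nhdsGT_zero).congr
    fun n => ?_
  simp only [Pi.inv_apply, inv_div]

theorem tendsto_pow_div_succ_mul_succ_atTop {b : ℝ} (hb : 1 < b) :
    Tendsto (fun n : ℕ => b ^ n / (((n : ℝ) + 1) * ((n : ℝ) + 2))) atTop atTop := by
  refine tendsto_atTop_mono' _ ?_ ((tendsto_pow_div_pow_const_atTop hb 2).const_mul_atTop
    (by norm_num : (0 : ℝ) < 6⁻¹))
  filter_upwards [eventually_ge_atTop 1] with n hn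
  have hn : (1 : ℝ) ≤ n := by exact_mod_cast hn
  rw [← div_eq_inv_mul, div_div]
  exact div_le_div_of_nonneg_left (pow_nonneg (by linarith) n) (by positivity) (by nlinarith)

theorem summable_tsallis_of_one_lt {α : Type*} {m : α → ℝ} {q : ℝ} (h0 : ∀ s, 0 ≤ m s)
    (hm : ∀ F : Finset α, ∑ s ∈ F, m s ≤ 1) (hq : 1 < q) :
    Summable fun s => (m s - m s ^ q) / (q - 1) := by
  have h1 : ∀ s, m s ≤ 1 := fun s => by simpa using hm {s}
  refine .of_nonneg_of_le (fun s => div_nonneg ?_ (by linarith)) (fun s => ?_)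
    ((summable_of_sum_le h0 hm).div_const (q - 1))
  · linarith [Real.rpow_le_self_of_le_one (h0 s) (h1 s) hq.le]
  · gcongr
    linarith [Real.rpow_nonneg (h0 s) q]

theorem exists_le_sum_tsallis_of_forall_exists_le_sum_rpow {α : Type*} {m : α → ℝ} {q : ℝ}
    (hm : ∀ F : Finset α, ∑ s ∈ F, m s ≤ 1) (hq : q < 1)
    (h : ∀ B, ∃ F : Finset α, B ≤ ∑ s ∈ F, m s ^ q) (B : ℝ) :
    ∃ F : Finset α, B ≤ ∑ s ∈ F, (m s - m s ^ q) / (q - 1) := by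
  obtain ⟨F, hF⟩ := h (B * (1 - q) + 1)
  refine ⟨F, ?_⟩
  have hsum : ∑ s ∈ F, (m s - m s ^ q) / (q - 1) =
      (∑ s ∈ F, m s ^ q - ∑ s ∈ F, m s) / (1 - q) := by
    rw [← Finset.sum_sub_distrib, Finset.sum_div]
    refine Finset.sum_congr rfl fun s _ => ?_
    rw [← neg_sub (1 : ℝ) q, div_neg, ← neg_div, neg_sub]
  rw [hsum, le_div_iff₀ (by linarith)]
  linarith [hm F]

namespace Paper

open Finset

def stringsOfLength (n : ℕ) : Finset Str :=
  (univ : Finset (Fin n → Bool)).map ⟨List.ofFn, List.ofFn_injective⟩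

theorem mem_stringsOfLength {n : ℕ} {s : Str} : s ∈ stringsOfLength n ↔ s.length = n := by
  refine ⟨?_, fun h => ?_⟩
  · simp only [stringsOfLength, Finset.mem_map]
    rintro ⟨v, -, rfl⟩
    exact List.length_ofFn
  · subst h
    exact Finset.mem_map.mpr ⟨fun i => s[i], mem_univ _, List.ofFn_getElem⟩

theorem card_stringsOfLength (n : ℕ) : #(stringsOfLength n) = 2 ^ n := by
  simp [stringsOfLength]

def lengthWeight (n : ℕ) : ℚ := ((2 ^ n * ((n + 1) * (n + 2)) : ℕ) : ℚ)⁻¹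

noncomputable def lengthMeasure (s : Str) : ℝ := lengthWeight s.length

theorem cast_lengthWeight (n : ℕ) :
    (lengthWeight n : ℝ) = ((2 : ℝ) ^ n * ((n + 1) * (n + 2)))⁻¹ := by
  simp only [lengthWeight]
  push_cast
  ring

theorem lengthWeight_pos (n : ℕ) : 0 < (lengthWeight n : ℝ) := by
  rw [cast_lengthWeight]
  positivity

theorem primrec_lengthWeight : Primrec lengthWeight := by
  have hden : ∀ n : ℕ, 0 < 2 ^ n * ((n + 1) * (n + 2)) := fun n => by positivity
  refine Primrec.rat_of_num_den ((Primrec.const 1).of_eq fun n => ?_) ?_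
  · exact (Rat.inv_natCast_num_of_pos (hden n)).symm
  · have hpow : Primrec fun n : ℕ => 2 ^ n :=
      (Primrec₂.unpaired'.mp Nat.Primrec.pow).comp (Primrec.const 2) Primrec.id
    refine (Primrec.nat_mul.comp hpow (Primrec.nat_mul.comp Primrec.succ
      (Primrec.nat_add.comp Primrec.id (Primrec.const 2)))).of_eq fun n => ?_
    exact (Rat.inv_natCast_den_of_pos (hden n)).symm

theorem sum_stringsOfLength_lengthMeasure (n : ℕ) :
    ∑ s ∈ stringsOfLength n, lengthMeasure s = ((n : ℝ) + 1)⁻¹ - ((n : ℝ) + 2)⁻¹ := by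
  rw [sum_congr rfl fun s hs => by rw [lengthMeasure, mem_stringsOfLength.mp hs], sum_const,
    card_stringsOfLength, nsmul_eq_mul, Nat.cast_pow, Nat.cast_ofNat, cast_lengthWeight]
  field_simp
  ring

theorem sum_lengthMeasure_le_one (F : Finset Str) : ∑ s ∈ F, lengthMeasure s ≤ 1 := by
  have htelescope (N : ℕ) :
      ∑ n ∈ range N, (((n : ℝ) + 1)⁻¹ - ((n : ℝ) + 2)⁻¹) = 1 - ((N : ℝ) + 1)⁻¹ := by
    induction N with
    | zero => simp
    | succ N ih => rw [sum_range_succ, ih]; push_cast; ring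
  set N := F.sup List.length + 1
  have hmaps : ∀ s ∈ F, s.length ∈ range N := fun s hs =>
    mem_range.mpr (Nat.lt_succ_of_le (le_sup hs))
  calc ∑ s ∈ F, lengthMeasure s
      = ∑ n ∈ range N, ∑ s ∈ F with s.length = n, lengthMeasure s :=
        (sum_fiberwise_of_maps_to hmaps _).symm
    _ ≤ ∑ n ∈ range N, ∑ s ∈ stringsOfLength n, lengthMeasure s :=
        sum_le_sum fun n _ => sum_le_sum_of_subset_of_nonneg
          (fun s hs => mem_stringsOfLength.mpr (mem_filter.mp hs).2)
          fun s _ _ => (lengthWeight_pos _).le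
    _ = 1 - ((N : ℝ) + 1)⁻¹ := by simp_rw [sum_stringsOfLength_lengthMeasure, htelescope]
    _ ≤ 1 := sub_le_self _ (by positivity)

theorem lcSemiMeasure_lengthMeasure : LCSemiMeasure lengthMeasure := by
  refine ⟨⟨fun s => ⟨(lengthWeight_pos _).le, ?_⟩, sum_lengthMeasure_le_one⟩,
    fun _ s => lengthWeight s.length, ?_, fun s => ⟨fun _ => ⟨?_, le_rfl⟩, tendsto_const_nhds⟩⟩
  · simpa using sum_lengthMeasure_le_one {s}
  · exact (primrec_lengthWeight.comp (Primrec.list_length.comp Primrec.snd)).to_comp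
  · exact_mod_cast (lengthWeight_pos s.length).le

theorem div_le_two_pow_mul_lengthWeight_rpow {q : ℝ} (hq : q ≤ 1) (n : ℕ) :
    (2 / 2 ^ q) ^ n / (((n : ℝ) + 1) * ((n : ℝ) + 2)) ≤ 2 ^ n * (lengthWeight n : ℝ) ^ q := by
  have hpoly : 1 ≤ ((n : ℝ) + 1) * ((n : ℝ) + 2) := by nlinarith [(n.cast_nonneg : (0 : ℝ) ≤ n)]
  have := Real.rpow_le_self_of_one_le hpoly hq
  rw [cast_lengthWeight, Real.inv_rpow (by positivity), Real.mul_rpow (by positivity)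
    (by positivity), ← Real.rpow_natCast_mul zero_le_two, mul_comm (n : ℝ),
    Real.rpow_mul_natCast zero_le_two, div_pow, div_div, ← div_eq_mul_inv]
  gcongr

theorem tendsto_two_pow_mul_lengthWeight_rpow {q : ℝ} (hq : q < 1) :
    Tendsto (fun n : ℕ => 2 ^ n * (lengthWeight n : ℝ) ^ q) atTop atTop := by
  have hb : 1 < 2 / (2 : ℝ) ^ q := by
    rw [one_lt_div (by positivity)]
    simpa using Real.rpow_lt_rpow_of_exponent_lt one_lt_two hq
  exact tendsto_atTop_mono (div_le_two_pow_mul_lengthWeight_rpow hq.le)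
    (tendsto_pow_div_succ_mul_succ_atTop hb)

theorem exists_le_sum_rpow_of_dominates {m : Str → ℝ} {c q : ℝ} (hc : 0 < c)
    (hdom : ∀ s, c * lengthMeasure s ≤ m s) (hq0 : 0 ≤ q) (hq1 : q < 1) (B : ℝ) :
    ∃ F : Finset Str, B ≤ ∑ s ∈ F, m s ^ q := by
  obtain ⟨n, hn⟩ := (((tendsto_two_pow_mul_lengthWeight_rpow hq1).const_mul_atTop
    (Real.rpow_pos_of_pos hc q)).eventually_ge_atTop B).exists
  refine ⟨stringsOfLength n, hn.trans ?_⟩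
  calc c ^ q * (2 ^ n * (lengthWeight n : ℝ) ^ q)
      = ∑ s ∈ stringsOfLength n, (c * lengthMeasure s) ^ q := by
        rw [sum_congr rfl fun s hs => by rw [lengthMeasure, mem_stringsOfLength.mp hs],
          sum_const, card_stringsOfLength, nsmul_eq_mul,
          Real.mul_rpow hc.le (lengthWeight_pos n).le]
        push_cast
        ring
    _ ≤ ∑ s ∈ stringsOfLength n, m s ^ q := sum_le_sum fun s _ =>
        Real.rpow_le_rpow (mul_nonneg hc.le (lengthWeight_pos _).le) (hdom s) hq0

/-- The Tsallis entropy `S_q(m) = ∑ s, (m s - m s ^ q)/(q-1)` of a universal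
probability `m` converges for `q > 1` and diverges to infinity for `0 < q < 1`. -/
theorem tsallis_entropy_conv_div (m : Str → ℝ) (hm : UniversalProb m) (q : ℝ) :
    (1 < q → Summable (fun s => (m s - m s ^ q) / (q - 1))) ∧
    (0 < q → q < 1 →
      ∀ B : ℝ, ∃ F : Finset Str, B ≤ ∑ s ∈ F, (m s - m s ^ q) / (q - 1)) := by
  obtain ⟨⟨⟨hbound, hsum⟩, -⟩, hdom⟩ := hm
  refine ⟨summable_tsallis_of_one_lt (fun s => (hbound s).1) hsum, fun hq0 hq1 => ?_⟩
  obtain ⟨c, hc, hc_le⟩ := hdom lengthMeasure lcSemiMeasure_lengthMeasure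
  exact exists_le_sum_tsallis_of_forall_exists_le_sum_rpow hsum hq1
    (exists_le_sum_rpow_of_dominates hc hc_le hq0.le hq1)

end Paper
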